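/- arXiv:1405.1193 — 3 statements merged into one kernel-verified Lean document; each statement's English description precedes it below -/
import Mathlib

section
/- Let κ be a regular cardinal and μ a (κ,κ⁺)-cardinal. Then for every X ∈ μ, the set {rank(Z) : Z ∈ μ, X ⊆ Z} equals the interval [rank(X), ht(μ)), where ht(μ) is the height of the well-founded order (μ,⊂). Moreover, if X ⊆ Y are both in μ, then {rank(Z) : Z ∈ μ, X ⊆ Z ⊆ Y} = [rank(X), rank(Y)]. -/
open Set Cardinal Ordinal

noncomputable section

/-- Lower a (small) ordinal of `Ordinal.{1}` to `Ordinal.{0}` (the inverse of `Ordinal.lift`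
on its range). -/
noncomputable def olower (o : Ordinal.{1}) : Ordinal.{0} :=
  sInf {a : Ordinal.{0} | Ordinal.lift.{1} a = o}

/-- The order type of a set of ordinals. -/
noncomputable def otp (A : Set Ordinal.{0}) : Ordinal.{0} :=
  olower (Ordinal.type (Subrel ((· < ·) : Ordinal → Ordinal → Prop) (· ∈ A)))

/-- The canonical order-preserving transfer map from a set of ordinals `X` to a set of
ordinals `Y` of the same order type: an element `a ∈ X` is sent to the unique element of `Y`
occupying the same position. -/
noncomputable def omap (X Y : Set Ordinal) (a : Ordinal) : Ordinal :=
  sInf {b | b ∈ Y ∧ otp (Y ∩ Set.Iio b) = otp (X ∩ Set.Iio a)}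

/-- `IsStar X₁ X₂ X` says `X = X₁ * X₂`: `X₁` and `X₂` have the same order type,
`X = X₁ ∪ X₂`, and `X₁ ∩ X₂ < X₁ \ X₂ < X₂ \ X₁` elementwise. -/
def IsStar (X₁ X₂ X : Set Ordinal) : Prop :=
  otp X₁ = otp X₂ ∧ X = X₁ ∪ X₂ ∧
  (∀ a ∈ X₁ ∩ X₂, ∀ b ∈ X₁ \ X₂, a < b) ∧
  (∀ b ∈ X₁ \ X₂, ∀ c ∈ X₂ \ X₁, b < c)

set_option linter.deprecated false in
/-- A `(κ,κ⁺)`-cardinal (a neat simplified `(κ,1)`-morass presented as a family of sets):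
a family `μ ⊆ ℘_κ(κ⁺)` which is well-founded under strict inclusion, locally small,
homogeneous, directed, locally almost directed, covers `κ⁺` and is neat. -/
structure TwoCardinal (κ : Cardinal.{0}) where
  mu : Set (Set Ordinal)
  mem_sub : ∀ X ∈ mu, X ⊆ Set.Iio (Order.succ κ).ord
  mem_small : ∀ X ∈ mu, (otp X).card < κ
  wf : WellFounded fun X Y : mu => (X : Set Ordinal) ⊂ (Y : Set Ordinal)
  locSmall : ∀ X : mu,
    #{Z : mu // (Z : Set Ordinal) ⊂ (X : Set Ordinal)} < Cardinal.lift.{1} κ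
  homog : ∀ X Y : mu, (wf.apply X).rank = (wf.apply Y).rank →
    otp (X : Set Ordinal) = otp (Y : Set Ordinal) ∧
    {Z | Z ∈ mu ∧ Z ⊂ (Y : Set Ordinal)} =
      (fun Z => omap (X : Set Ordinal) (Y : Set Ordinal) '' Z) ''
        {Z | Z ∈ mu ∧ Z ⊂ (X : Set Ordinal)}
  directed : ∀ X ∈ mu, ∀ Y ∈ mu, ∃ Z ∈ mu, X ⊆ Z ∧ Y ⊆ Z
  locAlmostDirected : ∀ X : mu,
    (∀ Z₁ ∈ mu, ∀ Z₂ ∈ mu, Z₁ ⊂ (X : Set Ordinal) → Z₂ ⊂ (X : Set Ordinal) →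
      ∃ Z ∈ mu, Z ⊂ (X : Set Ordinal) ∧ Z₁ ⊆ Z ∧ Z₂ ⊆ Z) ∨
    (∃ X₁ X₂ : mu, (wf.apply X₁).rank = (wf.apply X₂).rank ∧
      IsStar (X₁ : Set Ordinal) (X₂ : Set Ordinal) (X : Set Ordinal) ∧
      {Z | Z ∈ mu ∧ Z ⊂ (X : Set Ordinal)} =
        {Z | Z ∈ mu ∧ Z ⊂ (X₁ : Set Ordinal)} ∪ {Z | Z ∈ mu ∧ Z ⊂ (X₂ : Set Ordinal)} ∪
          {(X₁ : Set Ordinal), (X₂ : Set Ordinal)})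
  covers : ⋃₀ mu = Set.Iio (Order.succ κ).ord
  neat : ∀ X : mu, (wf.apply X).rank ≠ 0 →
    (X : Set Ordinal) = ⋃₀ {Z | Z ∈ mu ∧ Z ⊂ (X : Set Ordinal)}

namespace TwoCardinal

variable {κ : Cardinal} (M : TwoCardinal κ)

set_option linter.deprecated false in
/-- The rank of an element of `μ` in the well-founded order `(μ, ⊂)`. -/
noncomputable def rank (X : M.mu) : Ordinal := olower ((M.wf.apply X).rank)

/-- The height of the well-founded order `(μ, ⊂)`. -/
noncomputable def ht : Ordinal := sSup (Set.range fun X : M.mu => M.rank X + 1)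

/-- The term `μ_ξ(α)` of the μ-sequence at `α`: equal to `X ∩ α` for any `X ∈ μ` of
rank `ξ` containing `α` (this is independent of the choice of `X`). -/
noncomputable def seq (α ξ : Ordinal) : Set Ordinal :=
  ⋃₀ {S | ∃ X : M.mu, M.rank X = ξ ∧ α ∈ (X : Set Ordinal) ∧
    S = (X : Set Ordinal) ∩ Set.Iio α}

/-- The μ-coloring `m(α,β) = min{rank X : α, β ∈ X ∈ μ}`. -/
noncomputable def mcol (a b : Ordinal) : Ordinal :=
  sInf {ξ | ∃ X : M.mu, M.rank X = ξ ∧ a ∈ (X : Set Ordinal) ∧ b ∈ (X : Set Ordinal)}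

end TwoCardinal

/-!
If `X ⊆ Y` and `rank X ≤ ξ < rank Y`, some `W ⊂ Y` has rank at least `ξ`. Local almost directedness
yields `V ⊂ Y` with `X ⊆ V` and `rank W ≤ rank V`: in the directed case an upper bound of `X` and `W`,
in the case `Y = X₁ * X₂` the half containing `X`. Well-founded induction on `Y` then produces
every rank in `[rank X, rank Y]` between `X` and `Y`. For the unbounded statement, an element of
rank at least `ξ < ht μ` is joined with `X` by directedness.
-/

namespace TwoCardinal

variable {κ : Cardinal} (M : TwoCardinal κ)

instance small_mu : Small.{0} M.mu :=
  small_subset (s := 𝒫 Set.Iio (Order.succ κ).ord) M.mem_sub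

-- `μ : Set (Set Ordinal.{0})` lives in `Type 1`, so its well-founded ranks are `Ordinal.{1}`;
-- local smallness keeps them below `Ordinal.univ.{0, 1}`, which is what makes `olower` exact.
theorem wfRank_mem_range_lift (X : M.mu) : (M.wf.apply X).rank ∈ Set.range Ordinal.lift.{1, 0} := by
  induction X using M.wf.induction with
  | _ Y IH =>
    refine Ordinal.liftPrincipalSeg.{0, 1}.mem_range_of_rel_top ?_
    rw [Ordinal.liftPrincipalSeg_top, (M.wf.apply Y).rank_eq]
    refine Ordinal.iSup_lt_of_lt_cof ?_ fun Z => ?_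
    · rw [Ordinal.cof_univ]
      exact (M.locSmall Y).trans (Cardinal.lift_lt_univ κ)
    · obtain ⟨a, ha⟩ := IH Z Z.2
      change Order.succ (M.wf.apply Z.1).rank < _
      rw [← ha, ← Ordinal.lift_succ]
      exact Ordinal.liftPrincipalSeg.{0, 1}.lt_top _

theorem lift_rank (X : M.mu) : Ordinal.lift.{1} (M.rank X) = (M.wf.apply X).rank :=
  csInf_mem (M.wfRank_mem_range_lift X)

theorem rank_lt_of_ssubset {X Y : M.mu} (h : (X : Set Ordinal) ⊂ Y) : M.rank X < M.rank Y := by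
  rw [← Ordinal.lift_lt.{1}, M.lift_rank, M.lift_rank]
  exact (M.wf.apply Y).rank_lt_of_rel h

theorem rank_le_of_subset {X Y : M.mu} (h : (X : Set Ordinal) ⊆ Y) : M.rank X ≤ M.rank Y := by
  rcases h.ssubset_or_eq with h | h
  · exact (M.rank_lt_of_ssubset h).le
  · rw [Subtype.ext h]

theorem exists_ssubset_le_rank {Y : M.mu} {ξ : Ordinal} (h : ξ < M.rank Y) :
    ∃ W : M.mu, (W : Set Ordinal) ⊂ Y ∧ ξ ≤ M.rank W := by
  rw [← Ordinal.lift_lt.{1}, M.lift_rank, (M.wf.apply Y).rank_eq, Ordinal.lt_iSup_iff] at h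
  obtain ⟨⟨W, hWY⟩, hξW⟩ := h
  refine ⟨W, hWY, ?_⟩
  rwa [Order.lt_succ_iff, ← M.lift_rank, Ordinal.lift_le] at hξW

theorem exists_superset_ssubset_rank_ge {X W Y : M.mu} (hXY : (X : Set Ordinal) ⊂ Y)
    (hWY : (W : Set Ordinal) ⊂ Y) :
    ∃ Z : M.mu, (X : Set Ordinal) ⊆ Z ∧ (Z : Set Ordinal) ⊂ Y ∧ M.rank W ≤ M.rank Z := by
  rcases M.locAlmostDirected Y with hdir | ⟨X₁, X₂, hrank, -, hsub⟩
  · obtain ⟨Z, hZ, hZY, hXZ, hWZ⟩ := hdir X X.2 W W.2 hXY hWY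
    exact ⟨⟨Z, hZ⟩, hXZ, hZY, M.rank_le_of_subset (Y := ⟨Z, hZ⟩) hWZ⟩
  · -- `Y = X₁ * X₂`: every proper subset of `Y` in `μ` lies in a half, and the halves have equal rank.
    have hrank : M.rank X₁ = M.rank X₂ := congrArg olower hrank
    have hhalf : ∀ Z : M.mu, (Z : Set Ordinal) ⊂ Y →
        (Z : Set Ordinal) ⊆ X₁ ∧ (X₁ : Set Ordinal) ⊂ Y ∨
          (Z : Set Ordinal) ⊆ X₂ ∧ (X₂ : Set Ordinal) ⊂ Y := by
      have hX₁ : (X₁ : Set Ordinal) ⊂ Y := (hsub.symm ▸ Or.inr (Or.inl rfl) :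
        (X₁ : Set Ordinal) ∈ {Z | Z ∈ M.mu ∧ Z ⊂ (Y : Set Ordinal)}).2
      have hX₂ : (X₂ : Set Ordinal) ⊂ Y := (hsub.symm ▸ Or.inr (Or.inr rfl) :
        (X₂ : Set Ordinal) ∈ {Z | Z ∈ M.mu ∧ Z ⊂ (Y : Set Ordinal)}).2
      intro Z hZY
      have hZ : (Z : Set Ordinal) ∈ {Z | Z ∈ M.mu ∧ Z ⊂ (Y : Set Ordinal)} := ⟨Z.2, hZY⟩
      rw [hsub] at hZ
      rcases hZ with (h | h) | (h | h)
      exacts [.inl ⟨h.2.subset, hX₁⟩, .inr ⟨h.2.subset, hX₂⟩, .inl ⟨h.subset, hX₁⟩,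
        .inr ⟨h.subset, hX₂⟩]
    have hW : M.rank W ≤ M.rank X₁ := by
      rcases hhalf W hWY with ⟨h, -⟩ | ⟨h, -⟩
      · exact M.rank_le_of_subset h
      · exact hrank ▸ M.rank_le_of_subset h
    rcases hhalf X hXY with ⟨hX, hX₁⟩ | ⟨hX, hX₂⟩
    · exact ⟨X₁, hX, hX₁, hW⟩
    · exact ⟨X₂, hX, hX₂, hrank ▸ hW⟩

theorem exists_rank_eq_of_subset {X Y : M.mu} (hXY : (X : Set Ordinal) ⊆ Y) {ξ : Ordinal}
    (hXξ : M.rank X ≤ ξ) (hξY : ξ ≤ M.rank Y) :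
    ∃ Z : M.mu, (X : Set Ordinal) ⊆ Z ∧ (Z : Set Ordinal) ⊆ Y ∧ M.rank Z = ξ := by
  induction Y using M.wf.induction with
  | _ Y IH =>
    rcases hξY.eq_or_lt with rfl | hξY
    · exact ⟨Y, hXY, subset_rfl, rfl⟩
    obtain ⟨W, hWY, hξW⟩ := M.exists_ssubset_le_rank hξY
    have hXY : (X : Set Ordinal) ⊂ Y :=
      hXY.ssubset_of_ne fun h => (hXξ.trans_lt hξY).ne (by rw [Subtype.ext h])
    obtain ⟨V, hXV, hVY, hWV⟩ := M.exists_superset_ssubset_rank_ge hXY hWY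
    obtain ⟨Z, hXZ, hZV, hZ⟩ := IH V hVY hXV (hξW.trans hWV)
    exact ⟨Z, hXZ, hZV.trans hVY.subset, hZ⟩

theorem lt_ht_iff {ξ : Ordinal} : ξ < M.ht ↔ ∃ W : M.mu, ξ ≤ M.rank W := by
  simp only [ht, ← iSup.eq_1, lt_ciSup_iff' Ordinal.bddAbove_of_small, Order.lt_add_one_iff]

theorem rank_lt_ht (X : M.mu) : M.rank X < M.ht :=
  M.lt_ht_iff.2 ⟨X, le_rfl⟩

theorem ranks_between_eq_Icc {X Y : M.mu} (hXY : (X : Set Ordinal) ⊆ Y) :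
    {r | ∃ Z : M.mu, (X : Set Ordinal) ⊆ Z ∧ (Z : Set Ordinal) ⊆ Y ∧ M.rank Z = r} =
      Set.Icc (M.rank X) (M.rank Y) := by
  ext r
  constructor
  · rintro ⟨Z, hXZ, hZY, rfl⟩
    exact ⟨M.rank_le_of_subset hXZ, M.rank_le_of_subset hZY⟩
  · rintro ⟨hXr, hrY⟩
    exact M.exists_rank_eq_of_subset hXY hXr hrY

theorem ranks_above_eq_Ico (X : M.mu) :
    {r | ∃ Z : M.mu, (X : Set Ordinal) ⊆ Z ∧ M.rank Z = r} = Set.Ico (M.rank X) M.ht := by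
  ext r
  constructor
  · rintro ⟨Z, hXZ, rfl⟩
    exact ⟨M.rank_le_of_subset hXZ, M.rank_lt_ht Z⟩
  · rintro ⟨hXr, hrht⟩
    obtain ⟨W, hrW⟩ := M.lt_ht_iff.1 hrht
    obtain ⟨V, hV, hXV, hWV⟩ := M.directed X X.2 W W.2
    obtain ⟨Z, hXZ, -, hZ⟩ := M.exists_rank_eq_of_subset hXV hXr
      (hrW.trans (M.rank_le_of_subset (Y := ⟨V, hV⟩) hWV))
    exact ⟨Z, hXZ, hZ⟩

end TwoCardinal

theorem density_lemma_general (κ : Cardinal) (M : TwoCardinal κ) (X : M.mu) :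
    {r | ∃ Z : M.mu, (X : Set Ordinal) ⊆ (Z : Set Ordinal) ∧ M.rank Z = r} =
      Set.Ico (M.rank X) M.ht ∧
    ∀ Y : M.mu, (X : Set Ordinal) ⊆ (Y : Set Ordinal) →
      {r | ∃ Z : M.mu, (X : Set Ordinal) ⊆ (Z : Set Ordinal) ∧
          (Z : Set Ordinal) ⊆ (Y : Set Ordinal) ∧ M.rank Z = r} =
        Set.Icc (M.rank X) (M.rank Y) :=
  ⟨M.ranks_above_eq_Ico X, fun _ => M.ranks_between_eq_Icc⟩

/-- The density lemma. -/
theorem density_lemma (κ : Cardinal) (hκ : κ.IsRegular) (M : TwoCardinal κ) (X : M.mu) :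
    {r | ∃ Z : M.mu, (X : Set Ordinal) ⊆ (Z : Set Ordinal) ∧ M.rank Z = r} =
      Set.Ico (M.rank X) M.ht ∧
    ∀ Y : M.mu, (X : Set Ordinal) ⊆ (Y : Set Ordinal) →
      {r | ∃ Z : M.mu, (X : Set Ordinal) ⊆ (Z : Set Ordinal) ∧
          (Z : Set Ordinal) ⊆ (Y : Set Ordinal) ∧ M.rank Z = r} =
        Set.Icc (M.rank X) (M.rank Y) :=
  density_lemma_general κ M X
end
end

section
/- Let κ be a regular cardinal and μ a (κ,κ⁺)-cardinal. Then every ordinal α < κ⁺ belongs to some X ∈ μ of rank zero. -/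
open Set Cardinal Ordinal

noncomputable section

theorem olower_zero : olower 0 = 0 :=
  le_antisymm (csInf_le' (by simp)) zero_le

namespace TwoCardinal

variable {κ : Cardinal} (M : TwoCardinal κ)

theorem exists_ssubset_mem_of_wf_rank_ne_zero {X : M.mu} (hX : (M.wf.apply X).rank ≠ 0)
    {α : Ordinal} (hα : α ∈ (X : Set Ordinal)) :
    ∃ Z : M.mu, (Z : Set Ordinal) ⊂ X ∧ α ∈ (Z : Set Ordinal) := by
  rw [M.neat X hX] at hα
  obtain ⟨Z, ⟨hZ, hZX⟩, hαZ⟩ := hα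
  exact ⟨⟨Z, hZ⟩, hZX, hαZ⟩

theorem rank_eq_zero_of_minimal {α : Ordinal} {X : M.mu}
    (hmin : ∀ Z : M.mu, α ∈ (Z : Set Ordinal) → ¬(Z : Set Ordinal) ⊂ X)
    (hα : α ∈ (X : Set Ordinal)) : M.rank X = 0 := by
  have hX : (M.wf.apply X).rank = 0 := by
    by_contra hX
    obtain ⟨Z, hZX, hαZ⟩ := M.exists_ssubset_mem_of_wf_rank_ne_zero hX hα
    exact hmin Z hαZ hZX
  rw [rank, hX, olower_zero]

theorem exists_mem_of_lt {α : Ordinal} (hα : α < (Order.succ κ).ord) :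
    ∃ X : M.mu, α ∈ (X : Set Ordinal) := by
  rw [← Set.mem_Iio, ← M.covers] at hα
  obtain ⟨X, hX, hαX⟩ := hα
  exact ⟨⟨X, hX⟩, hαX⟩

end TwoCardinal

theorem mem_rank_zero_general (κ : Cardinal) (M : TwoCardinal κ)
    (α : Ordinal) (hα : α < (Order.succ κ).ord) :
    ∃ X : M.mu, M.rank X = 0 ∧ α ∈ (X : Set Ordinal) := by
  obtain ⟨X, hαX, hmin⟩ := M.wf.has_min {X | α ∈ (X : Set Ordinal)} (M.exists_mem_of_lt hα)
  exact ⟨X, M.rank_eq_zero_of_minimal hmin hαX, hαX⟩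

/-- Every element of `κ⁺` belongs to some element of `μ` of rank zero. -/
theorem mem_rank_zero (κ : Cardinal) (hκ : κ.IsRegular) (M : TwoCardinal κ)
    (α : Ordinal) (hα : α < (Order.succ κ).ord) :
    ∃ X : M.mu, M.rank X = 0 ∧ α ∈ (X : Set Ordinal) :=
  mem_rank_zero_general κ M α hα
end
end

section
/- Let κ be a regular cardinal and μ a (κ,κ⁺)-cardinal. Then μ is cofinal in (℘_κ(κ⁺), ⊆), i.e., every subset of κ⁺ of cardinality < κ is contained in some element of μ. -/
open Set Cardinal Ordinal

noncomputable section

/-!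
Choose `α < κ⁺` with `s ⊆ α` and `|α| ≥ κ`, and for each `a ∈ s` some `T a ∈ μ` containing `a`
and `α`. Any two members of `μ` have `⊆`-comparable traces below each common point: induct on a
common upper bound `Z ∈ μ`; if `Z` is locally directed use the induction hypothesis, and if
`Z = Z₁ * Z₂` transfer the part below `Z₂` to `Z₁` by homogeneity, along the canonical
isomorphism `Z₁ ≅ Z₂`, which is the identity on the common initial segment `Z₁ ∩ Z₂`.
By regularity of `κ`, fewer than `κ` sets of size `< κ` cannot cover `α`, so some `γ < α` lies
in no `T a`. If `W ∈ μ` contains `α` and `γ`, its trace at `α` is not contained in `T a`, hence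
`T a ∩ α ⊆ W`, and so `s ⊆ W`.
-/

section OrderType

variable {A : Set Ordinal.{0}}

theorem lift_otp (hA : BddAbove A) : Ordinal.lift.{1} (otp A) = typeLT A := by
  obtain ⟨o, ho⟩ := hA
  have hle : typeLT A ≤ Ordinal.lift.{1} (Order.succ o) := by
    rw [← type_lt_Iio]
    exact type_mono fun x hx => Order.lt_succ_of_le (ho hx)
  exact csInf_mem (mem_range_lift_of_le hle)

theorem lift_otp_inter_Iio (hA : BddAbove A) {a : Ordinal} (ha : a ∈ A) :
    Ordinal.lift.{1} (otp (A ∩ Iio a)) = typein (α := A) (· < ·) ⟨a, ha⟩ := by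
  rw [lift_otp (hA.mono inter_subset_left), ← type_Iio_lt]
  exact OrderIso.ordinalType_congr ⟨⟨fun x => ⟨⟨x.1, x.2.1⟩, x.2.2⟩, fun y => ⟨y.1.1, y.1.2, y.2⟩,
    fun _ => rfl, fun _ => rfl⟩, Iff.rfl⟩

theorem strictMonoOn_otp_inter_Iio (hA : BddAbove A) :
    StrictMonoOn (fun a => otp (A ∩ Iio a)) A := fun a ha b hb hab => by
  rw [← Ordinal.lift_lt.{1}, lift_otp_inter_Iio hA ha, lift_otp_inter_Iio hA hb]
  exact (typein_lt_typein (α := A) _).2 hab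

theorem otp_inter_Iio_lt_otp (hA : BddAbove A) {a : Ordinal} (ha : a ∈ A) :
    otp (A ∩ Iio a) < otp A := by
  rw [← Ordinal.lift_lt.{1}, lift_otp_inter_Iio hA ha, lift_otp hA]
  exact typein_lt_type _ _

theorem exists_otp_inter_Iio_eq (hA : BddAbove A) {p : Ordinal} (hp : p < otp A) :
    ∃ a ∈ A, otp (A ∩ Iio a) = p := by
  rw [← Ordinal.lift_lt.{1}, lift_otp hA] at hp
  obtain ⟨⟨a, ha⟩, hap⟩ := typein_surj _ hp
  exact ⟨a, ha, Ordinal.lift_inj.1 ((lift_otp_inter_Iio hA ha).trans hap)⟩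

theorem mk_eq_lift_card_otp (hA : BddAbove A) : #A = Cardinal.lift.{1} (otp A).card := by
  rw [Ordinal.lift_card, lift_otp hA, card_type]

end OrderType

universe u

theorem exists_lt_ord_subset_Iio_of_isRegular {c : Cardinal.{u}} (hc : c.IsRegular)
    {s : Set Ordinal.{u}} (hs : s ⊆ Iio c.ord) (hsc : #s < Cardinal.lift.{u + 1} c) :
    ∃ α < c.ord, s ⊆ Iio α := by
  refine ⟨sSup ((· + 1) '' s), Ordinal.sSup_add_one_lt_of_lt_cof ?_ hs, fun a ha => ?_⟩
  · rwa [lift_ord, hc.lift.cof_ord]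
  · exact (Order.lt_add_one_iff.2 le_rfl).trans_le
      (le_csSup (Ordinal.bddAbove_image (bddAbove_Iio.mono hs) _) (mem_image_of_mem (· + 1) ha))

theorem exists_mem_forall_notMem_of_isRegular {β ι : Type u} {c : Cardinal.{u}}
    (hc : c.IsRegular) {T : ι → Set β} (hι : #ι < c) (hT : ∀ i, #(T i) < c) {S : Set β}
    (hS : c ≤ #S) : ∃ x ∈ S, ∀ i, x ∉ T i := by
  by_contra! h
  have hU := (card_iUnion_lt_iff_forall_of_isRegular hc hι).2 hT
  exact hU.not_ge (hS.trans (mk_le_mk_of_subset fun x hx => mem_iUnion.2 (h x hx)))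

/-- `X ∩ Y` is an initial segment of both `X` and `Y`. -/
def AgreeBelowInter (X Y : Set Ordinal) : Prop :=
  ∀ γ ∈ X ∩ Y, X ∩ Iio γ = Y ∩ Iio γ

theorem AgreeBelowInter.symm {X Y : Set Ordinal} (h : AgreeBelowInter X Y) :
    AgreeBelowInter Y X :=
  fun γ hγ => (h γ ⟨hγ.2, hγ.1⟩).symm

theorem IsStar.agreeBelowInter {X₁ X₂ X : Set Ordinal} (h : IsStar X₁ X₂ X)
    (hne : (X₁ \ X₂).Nonempty) : AgreeBelowInter X₁ X₂ := by
  obtain ⟨-, -, hlt₁, hlt₂⟩ := h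
  obtain ⟨b, hb⟩ := hne
  intro γ hγ
  ext x
  refine and_congr_left fun hx => ⟨fun hx₁ => ?_, fun hx₂ => ?_⟩
  · by_contra hx₂
    exact lt_asymm hx (hlt₁ γ hγ x ⟨hx₁, hx₂⟩)
  · by_contra hx₁
    exact lt_asymm hx ((hlt₁ γ hγ b hb).trans (hlt₂ b hb x ⟨hx₂, hx₁⟩))

section Transfer

variable {X Y : Set Ordinal.{0}}

theorem omap_mem_and_otp_inter_Iio (hX : BddAbove X) (hY : BddAbove Y) (hXY : otp X = otp Y)
    {a : Ordinal} (ha : a ∈ X) :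
    omap X Y a ∈ Y ∧ otp (Y ∩ Iio (omap X Y a)) = otp (X ∩ Iio a) :=
  csInf_mem (exists_otp_inter_Iio_eq hY (hXY ▸ otp_inter_Iio_lt_otp hX ha))

theorem omap_injOn (hX : BddAbove X) (hY : BddAbove Y) (hXY : otp X = otp Y) :
    InjOn (omap X Y) X := fun a ha b hb hab => by
  have ha' := omap_mem_and_otp_inter_Iio hX hY hXY ha
  have hb' := omap_mem_and_otp_inter_Iio hX hY hXY hb
  rw [hab, hb'.2] at ha'
  exact (strictMonoOn_otp_inter_Iio hX).injOn ha hb ha'.2.symm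

theorem omap_eq_self_of_mem_inter (hX : BddAbove X) (hY : BddAbove Y) (hXY : otp X = otp Y)
    (hagree : AgreeBelowInter X Y) {γ : Ordinal} (hγ : γ ∈ X ∩ Y) : omap X Y γ = γ := by
  obtain ⟨hmem, hpos⟩ := omap_mem_and_otp_inter_Iio hX hY hXY hγ.1
  rw [hagree γ hγ] at hpos
  exact (strictMonoOn_otp_inter_Iio hY).injOn hmem hγ.2 hpos

theorem mem_omap_image_iff (hX : BddAbove X) (hY : BddAbove Y) (hXY : otp X = otp Y)
    (hagree : AgreeBelowInter X Y) {Z : Set Ordinal} (hZ : Z ⊆ X) {γ : Ordinal}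
    (hγ : γ ∈ X ∩ Y) : γ ∈ omap X Y '' Z ↔ γ ∈ Z := by
  have hfix := omap_eq_self_of_mem_inter hX hY hXY hagree hγ
  refine ⟨fun ⟨a, ha, hae⟩ => ?_, fun h => ⟨γ, h, hfix⟩⟩
  rwa [← omap_injOn hX hY hXY (hZ ha) hγ.1 (hae.trans hfix.symm)]

theorem omap_image_inter_Iio (hX : BddAbove X) (hY : BddAbove Y) (hXY : otp X = otp Y)
    (hagree : AgreeBelowInter X Y) {Z : Set Ordinal} (hZ : Z ⊆ X) {α : Ordinal}
    (hα : α ∈ X ∩ Y) : omap X Y '' Z ∩ Iio α = Z ∩ Iio α := by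
  have hiff := fun {x} (hx : x ∈ X ∩ Y) => mem_omap_image_iff hX hY hXY hagree hZ hx
  ext x
  constructor
  · rintro ⟨hxZ, hx⟩
    have hxY : x ∈ Y := by
      obtain ⟨a, ha, rfl⟩ := hxZ
      exact (omap_mem_and_otp_inter_Iio hX hY hXY (hZ ha)).1
    have hxX : x ∈ X := ((hagree α hα).superset ⟨hxY, hx⟩).1
    exact ⟨(hiff ⟨hxX, hxY⟩).1 hxZ, hx⟩
  · rintro ⟨hxZ, hx⟩
    have hxY : x ∈ Y := ((hagree α hα).subset ⟨hZ hxZ, hx⟩).1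
    exact ⟨(hiff ⟨hZ hxZ, hxY⟩).2 hxZ, hx⟩

end Transfer

def TraceComparable (X Y : Set Ordinal) : Prop :=
  ∀ α ∈ X ∩ Y, X ∩ Iio α ⊆ Y ∩ Iio α ∨ Y ∩ Iio α ⊆ X ∩ Iio α

theorem TraceComparable.symm {X Y : Set Ordinal} (h : TraceComparable X Y) :
    TraceComparable Y X :=
  fun α hα => (h α ⟨hα.2, hα.1⟩).symm

theorem traceComparable_of_subset {X Y : Set Ordinal} (h : X ⊆ Y) : TraceComparable X Y :=
  fun _ _ => Or.inl (inter_subset_inter_left _ h)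

theorem subset_or_subset_of_ssubset {α : Type*} {F : Set (Set α)} {X X₁ X₂ W : Set α}
    (hF : {Z | Z ∈ F ∧ Z ⊂ X} =
      {Z | Z ∈ F ∧ Z ⊂ X₁} ∪ {Z | Z ∈ F ∧ Z ⊂ X₂} ∪ {X₁, X₂})
    (hW : W ∈ F) (hWX : W ⊂ X) : W ⊆ X₁ ∨ W ⊆ X₂ := by
  have hW' : W ∈ {Z | Z ∈ F ∧ Z ⊂ X} := ⟨hW, hWX⟩
  rw [hF] at hW'
  rcases hW' with (h | h) | rfl | rfl
  exacts [Or.inl h.2.subset, Or.inr h.2.subset, Or.inl le_rfl, Or.inr le_rfl]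

namespace TwoCardinal

variable {κ : Cardinal} (M : TwoCardinal κ)

theorem bddAbove_of_mem {X : Set Ordinal} (hX : X ∈ M.mu) : BddAbove X :=
  bddAbove_Iio.mono (M.mem_sub X hX)

theorem mk_lt_of_mem {X : Set Ordinal} (hX : X ∈ M.mu) : #X < Cardinal.lift.{1} κ := by
  rw [mk_eq_lift_card_otp (M.bddAbove_of_mem hX)]
  exact Cardinal.lift_lt.2 (M.mem_small X hX)

theorem exists_mem_of_lt_s8 {γ δ : Ordinal} (hγ : γ < (Order.succ κ).ord)
    (hδ : δ < (Order.succ κ).ord) : ∃ W ∈ M.mu, γ ∈ W ∧ δ ∈ W := by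
  rw [← mem_Iio, ← M.covers] at hγ hδ
  obtain ⟨A, hA, hγA⟩ := hγ
  obtain ⟨B, hB, hδB⟩ := hδ
  obtain ⟨W, hW, hAW, hBW⟩ := M.directed A hA B hB
  exact ⟨W, hW, hAW hγA, hBW hδB⟩

set_option linter.deprecated false in
theorem traceComparable_of_rank_eq {W₁ W₂ : M.mu}
    (hrank : (M.wf.apply W₁).rank = (M.wf.apply W₂).rank)
    (hagree : AgreeBelowInter W₁ W₂)
    (hW₁ : ∀ {X Y}, X ∈ M.mu → Y ∈ M.mu → X ⊆ W₁ → Y ⊆ W₁ → TraceComparable X Y)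
    {X Y : Set Ordinal} (hX : X ∈ M.mu) (hY : Y ∈ M.mu) (hXW : X ⊆ W₁) (hYW : Y ⊆ W₂) :
    TraceComparable X Y := by
  rintro α ⟨hαX, hαY⟩
  have hα : α ∈ (W₁ : Set Ordinal) ∩ W₂ := ⟨hXW hαX, hYW hαY⟩
  obtain rfl | hYW := hYW.eq_or_ssubset
  · exact Or.inl ((inter_subset_inter_left _ hXW).trans (hagree α hα).subset)
  obtain ⟨hotp, hhomog⟩ := M.homog W₁ W₂ hrank
  have hYimg : Y ∈ {Z | Z ∈ M.mu ∧ Z ⊂ (W₂ : Set Ordinal)} := ⟨hY, hYW⟩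
  rw [hhomog] at hYimg
  obtain ⟨Y', ⟨hY', hY'W⟩, rfl⟩ := hYimg
  have hb₁ := M.bddAbove_of_mem W₁.2
  have hb₂ := M.bddAbove_of_mem W₂.2
  have hαY' : α ∈ Y' := (mem_omap_image_iff hb₁ hb₂ hotp hagree hY'W.subset hα).1 hαY
  rw [omap_image_inter_Iio hb₁ hb₂ hotp hagree hY'W.subset hα]
  exact hW₁ hX hY' hXW hY'W.subset α ⟨hαX, hαY'⟩

set_option linter.deprecated false in
theorem traceComparable_of_subset_of_subset (Z : M.mu) {X Y : Set Ordinal} (hX : X ∈ M.mu)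
    (hY : Y ∈ M.mu) (hXZ : X ⊆ Z) (hYZ : Y ⊆ Z) : TraceComparable X Y := by
  induction Z using M.wf.induction generalizing X Y with
  | _ Z IH =>
  obtain rfl | hXZ := hXZ.eq_or_ssubset
  · exact (traceComparable_of_subset hYZ).symm
  obtain rfl | hYZ := hYZ.eq_or_ssubset
  · exact traceComparable_of_subset hXZ.subset
  rcases M.locAlmostDirected Z with hdir | ⟨Z₁, Z₂, hrank, hstar, hpred⟩
  · obtain ⟨W, hW, hWZ, hXW, hYW⟩ := hdir X hX Y hY hXZ hYZ
    exact IH ⟨W, hW⟩ hWZ hX hY hXW hYW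
  have hZ₁ : (Z₁ : Set Ordinal) ⊂ Z := (hpred.superset (by simp)).2
  have hZ₂ : (Z₂ : Set Ordinal) ⊂ Z := (hpred.superset (by simp)).2
  have hagree : AgreeBelowInter Z₁ Z₂ := hstar.agreeBelowInter <| diff_nonempty.2 fun h =>
    hZ₂.ne (hstar.2.1.trans (union_eq_right.2 h)).symm
  rcases subset_or_subset_of_ssubset hpred hX hXZ with hX₁ | hX₂ <;>
    rcases subset_or_subset_of_ssubset hpred hY hYZ with hY₁ | hY₂
  · exact IH Z₁ hZ₁ hX hY hX₁ hY₁
  · exact M.traceComparable_of_rank_eq hrank hagree (IH Z₁ hZ₁) hX hY hX₁ hY₂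
  · exact M.traceComparable_of_rank_eq hrank.symm hagree.symm (IH Z₂ hZ₂) hX hY hX₂ hY₁
  · exact IH Z₂ hZ₂ hX hY hX₂ hY₂

theorem traceComparable {X Y : Set Ordinal} (hX : X ∈ M.mu) (hY : Y ∈ M.mu) :
    TraceComparable X Y := by
  obtain ⟨Z, hZ, hXZ, hYZ⟩ := M.directed X hX Y hY
  exact M.traceComparable_of_subset_of_subset ⟨Z, hZ⟩ hX hY hXZ hYZ

end TwoCardinal

/-- A `(κ,κ⁺)`-cardinal is cofinal in `(℘_κ(κ⁺), ⊆)`. -/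
theorem cofinal_in_P_kappa (κ : Cardinal) (hκ : κ.IsRegular) (M : TwoCardinal κ)
    (s : Set Ordinal) (hs : s ⊆ Set.Iio (Order.succ κ).ord) (hcard : (otp s).card < κ) :
    ∃ X : M.mu, s ⊆ (X : Set Ordinal) := by
  have hmk : #s < Cardinal.lift.{1} κ := by
    rw [mk_eq_lift_card_otp (bddAbove_Iio.mono hs)]
    exact Cardinal.lift_lt.2 hcard
  obtain ⟨α₀, hα₀, hsα₀⟩ := exists_lt_ord_subset_Iio_of_isRegular
    (isRegular_succ hκ.aleph0_le) hs (hmk.trans (Cardinal.lift_lt.2 (Order.lt_succ κ)))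
  set α := max κ.ord α₀
  have hα : α < (Order.succ κ).ord := max_lt (ord_lt_ord.2 (Order.lt_succ κ)) hα₀
  have hsα : s ⊆ Iio α := hsα₀.trans (Iio_subset_Iio (le_max_right _ _))
  choose T hT hαT haT using fun a : s => M.exists_mem_of_lt_s8 hα (hs a.2)
  obtain ⟨γ, hγα, hγT⟩ := exists_mem_forall_notMem_of_isRegular hκ.lift hmk
    (fun a => M.mk_lt_of_mem (hT a)) (S := Iio α)
    (by rw [Cardinal.mk_Iio_ordinal, Cardinal.lift_le]; exact ord_le.1 (le_max_left _ _))
  obtain ⟨W, hW, hαW, hγW⟩ := M.exists_mem_of_lt_s8 hα (hγα.trans hα)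
  refine ⟨⟨W, hW⟩, fun a ha => ?_⟩
  rcases M.traceComparable (hT ⟨a, ha⟩) hW α ⟨hαT _, hαW⟩ with h | h
  · exact (h ⟨haT _, hsα ha⟩).1
  · exact absurd (h ⟨hγW, hγα⟩).1 (hγT _)
end
end
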